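/- arXiv:1709.02317 — 3 statements merged into one kernel-verified Lean document; each statement's English description precedes it below -/
import Mathlib

section
/- Consider finite design space 𝒳, f : 𝒳 → ℝᵖ, PSD matrices B₁,…,B_s with ranks r₁,…,r_s, positive definite H_j = K_j K_jᵀ with K_j invertible, and vectors u_j(y_k^{(j)}) with K_j⁻¹ B_j K_j⁻ᵀ = Σ_{k=1}^{r_j} u_j(y_k^{(j)}) u_j(y_k^{(j)})ᵀ. Define the extended design space 𝒳̃ = ⋃_j ({j}×𝒳 ∪ 𝒴_j) with regression vectors f̃ ∈ ℝ^{sp}: f̃(j,x) has j-th block K_j⁻¹f(x) and zeros elsewhere, f̃(y) for y ∈ 𝒴_j has j-th block u_j(y) and zeros elsewhere. Then for any extended design ξ̃ satisfying ξ̃(j,x) = ξ̃(1,x) for all x ∈ 𝒳 and j = 2,…,s and ξ̃(y) = 1 for all y ∈ ⋃_j 𝒴_j, the information matrix M̃(ξ̃) = Σ_{x̃∈𝒳̃} ξ̃(x̃) f̃(x̃)f̃(x̃)ᵀ is block-diagonal with j-th p×p diagonal block equal to K_j⁻¹(M(ξ̃(1,·)) + B_j)K_j⁻ᵀ, where M(ξ)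 = Σ_{x∈𝒳} ξ(x)f(x)f(x)ᵀ. -/
open Matrix


lemma aux_conj {p : ℕ} (A : Matrix (Fin p) (Fin p) ℝ) (v w : Fin p → ℝ) :
    A * vecMulVec v w * Aᵀ = vecMulVec (A.mulVec v) (A.mulVec w) := by
  ext i i'
  simp only [mul_apply, vecMulVec_apply, mulVec, dotProduct, transpose_apply,
    Finset.sum_mul, Finset.mul_sum]
  exact Finset.sum_congr rfl fun b _ => Finset.sum_congr rfl fun a _ => by ring

lemma sum_if_pull {α : Type*} (t : Finset α) (c : Prop) [Decidable c] (h : α → ℝ) :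
    ∑ a ∈ t, (if c then h a else 0) = if c then ∑ a ∈ t, h a else 0 := by
  split_ifs <;> simp

theorem stmt_14 {p s : ℕ} [NeZero s] {X : Type*} [Fintype X]
    (f : X → (Fin p → ℝ))
    (B K : Fin s → Matrix (Fin p) (Fin p) ℝ)
    (r : Fin s → ℕ)
    (hB : ∀ j, (B j).PosSemidef) (hr : ∀ j, (B j).rank = r j)
    (hK : ∀ j, IsUnit (K j))
    (u : (j : Fin s) → Fin (r j) → (Fin p → ℝ))
    (hu : ∀ j, (K j)⁻¹ * B j * ((K j)ᵀ)⁻¹ = ∑ k, vecMulVec (u j k) (u j k))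
    (ξ' : ((Fin s × X) ⊕ (Σ j : Fin s, Fin (r j))) → ℝ)
    (hξ'nn : ∀ z, 0 ≤ ξ' z)
    (hlink : ∀ (j : Fin s) (x : X), ξ' (Sum.inl (j, x)) = ξ' (Sum.inl (0, x)))
    (haux : ∀ y : (Σ j : Fin s, Fin (r j)), ξ' (Sum.inr y) = 1) :
    (∑ z, ξ' z •
        vecMulVec
          (Sum.elim
            (fun jx : Fin s × X => fun iq : Fin p × Fin s =>
              if iq.2 = jx.1 then ((K jx.1)⁻¹).mulVec (f jx.2) iq.1 else 0)
            (fun y : Σ j : Fin s, Fin (r j) => fun iq : Fin p × Fin s =>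
              if iq.2 = y.1 then u y.1 y.2 iq.1 else 0) z)
          (Sum.elim
            (fun jx : Fin s × X => fun iq : Fin p × Fin s =>
              if iq.2 = jx.1 then ((K jx.1)⁻¹).mulVec (f jx.2) iq.1 else 0)
            (fun y : Σ j : Fin s, Fin (r j) => fun iq : Fin p × Fin s =>
              if iq.2 = y.1 then u y.1 y.2 iq.1 else 0) z)) =
      blockDiagonal (fun j =>
        (K j)⁻¹ * ((∑ x, ξ' (Sum.inl (0, x)) • vecMulVec (f x) (f x)) + B j) *
          ((K j)ᵀ)⁻¹) := by
  have hblock : ∀ j : Fin s,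
      (K j)⁻¹ * ((∑ x, ξ' (Sum.inl (0, x)) • vecMulVec (f x) (f x)) + B j) * ((K j)ᵀ)⁻¹
        = (∑ x, ξ' (Sum.inl (0, x)) •
            vecMulVec (((K j)⁻¹).mulVec (f x)) (((K j)⁻¹).mulVec (f x)))
          + ∑ k, vecMulVec (u j k) (u j k) := by
    intro j
    rw [mul_add, add_mul, hu j]
    congr 1
    rw [(K j).transpose_nonsing_inv.symm, Matrix.mul_sum, Matrix.sum_mul]
    refine Finset.sum_congr rfl fun x _ => ?_
    rw [Matrix.mul_smul, Matrix.smul_mul, aux_conj]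
  ext ⟨i, q⟩ ⟨i', q'⟩
  simp only [Matrix.sum_apply, Matrix.smul_apply, vecMulVec_apply, smul_eq_mul,
    blockDiagonal_apply, Fintype.sum_sum_type, Sum.elim_inl, Sum.elim_inr,
    Fintype.sum_prod_type, haux, one_mul,
    mul_ite, ite_mul, mul_zero, zero_mul]
  rw [← Finset.univ_sigma_univ, Finset.sum_sigma]
  rw [Finset.sum_comm]
  simp only [sum_if_pull, Finset.sum_ite_eq, Finset.mem_univ, if_true]
  split_ifs with h
  · subst h
    rw [hblock q]
    simp [Matrix.add_apply, Matrix.sum_apply, Matrix.smul_apply, vecMulVec_apply,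
      hlink, mul_assoc]
  · simp
end

section
/- In the setting of the extended artificial model (previous construction): for any extended design ξ̃ satisfying the linking constraints (ξ̃(j,x)=ξ̃(1,x) for j≥2, ξ̃(y)=1 on auxiliary points), M̃(ξ̃) is invertible if and only if M(ξ̃(1,·)) + B_j is invertible for every j = 1,…,s; and in that case tr(M̃(ξ̃)⁻¹) = Σ_{j=1}^s tr((M(ξ̃(1,·)) + B_j)⁻¹ H_j). -/
open Matrix

/-- Regression vectors of the extended artificial model. -/
noncomputable def ftil {p s : ℕ} {X : Type*} (f : X → (Fin p → ℝ))
    (K : Fin s → Matrix (Fin p) (Fin p) ℝ)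
    (r : Fin s → ℕ) (u : (j : Fin s) → Fin (r j) → (Fin p → ℝ)) :
    ((Fin s × X) ⊕ (Σ j : Fin s, Fin (r j))) → (Fin p × Fin s → ℝ) :=
  Sum.elim
    (fun jx => fun iq => if iq.2 = jx.1 then ((K jx.1)⁻¹).mulVec (f jx.2) iq.1 else 0)
    (fun y => fun iq => if iq.2 = y.1 then u y.1 y.2 iq.1 else 0)

/-- Information matrix of a design. -/
def infoM {X : Type*} [Fintype X] {n : Type*} [Fintype n] [DecidableEq n]
    (f : X → (n → ℝ)) (ξ : X → ℝ) : Matrix n n ℝ :=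
  ∑ x, ξ x • vecMulVec (f x) (f x)

lemma conj_vecMulVec {n : Type*} [Fintype n] [DecidableEq n] (A : Matrix n n ℝ) (v : n → ℝ) :
    A * vecMulVec v v * Aᵀ = vecMulVec (A.mulVec v) (A.mulVec v) := by
  ext i i'
  simp only [Matrix.mul_apply, vecMulVec_apply, mulVec, dotProduct, transpose_apply,
    Finset.sum_mul, Finset.mul_sum]
  apply Finset.sum_congr rfl; intros; apply Finset.sum_congr rfl; intros; ring

lemma conj_infoM {X : Type*} [Fintype X] {n : Type*} [Fintype n] [DecidableEq n]
    (A : Matrix n n ℝ) (f : X → (n → ℝ)) (ξ : X → ℝ) :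
    A * infoM f ξ * Aᵀ = infoM (fun x => A.mulVec (f x)) ξ := by
  unfold infoM
  rw [Finset.mul_sum, Finset.sum_mul]
  exact Finset.sum_congr rfl fun x _ => by
    rw [Matrix.mul_smul, Matrix.smul_mul, conj_vecMulVec]

/-- The key block-diagonal structure. -/
lemma infoM_ftil_eq {p s : ℕ} [NeZero s] {X : Type*} [Fintype X]
    (f : X → (Fin p → ℝ))
    (B K : Fin s → Matrix (Fin p) (Fin p) ℝ)
    (r : Fin s → ℕ)
    (u : (j : Fin s) → Fin (r j) → (Fin p → ℝ))
    (hu : ∀ j, (K j)⁻¹ * B j * ((K j)ᵀ)⁻¹ = ∑ k, vecMulVec (u j k) (u j k))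
    (ξ' : ((Fin s × X) ⊕ (Σ j : Fin s, Fin (r j))) → ℝ)
    (hlink : ∀ (j : Fin s) (x : X), ξ' (Sum.inl (j, x)) = ξ' (Sum.inl (0, x)))
    (haux : ∀ y : (Σ j : Fin s, Fin (r j)), ξ' (Sum.inr y) = 1) :
    infoM (ftil f K r u) ξ' =
      blockDiagonal (fun j =>
        (K j)⁻¹ * (infoM f (fun x => ξ' (Sum.inl (0, x))) + B j) * ((K j)ᵀ)⁻¹) := by
  have hrhs : ∀ l : Fin s,
      ((K l)⁻¹ * (infoM f (fun x => ξ' (Sum.inl (0, x))) + B l) * ((K l)ᵀ)⁻¹) =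
      (fun i i' => (∑ x, ξ' (Sum.inl (0, x)) *
          (((K l)⁻¹).mulVec (f x) i * ((K l)⁻¹).mulVec (f x) i'))
        + ∑ k, u l k i * u l k i' : Matrix (Fin p) (Fin p) ℝ) := by
    intro l
    rw [mul_add, add_mul, hu l, show ((K l)ᵀ)⁻¹ = ((K l)⁻¹)ᵀ from
      (Matrix.transpose_nonsing_inv _).symm, conj_infoM]
    ext i i'
    simp [infoM, Matrix.sum_apply, vecMulVec_apply, mul_assoc]
  ext ⟨i, j⟩ ⟨i', j'⟩
  by_cases h : j = j'
  · subst h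
    rw [Matrix.blockDiagonal_apply_eq, hrhs j]
    simp only [infoM, Matrix.sum_apply, Matrix.smul_apply, vecMulVec_apply, smul_eq_mul,
      Fintype.sum_sum_type, Fintype.sum_prod_type, ftil, Sum.elim_inl, Sum.elim_inr]
    have h1 : (∑ l : Fin s, ∑ x : X, ξ' (Sum.inl (l, x)) *
        ((if j = l then ((K l)⁻¹).mulVec (f x) i else 0) *
          if j = l then ((K l)⁻¹).mulVec (f x) i' else 0)) =
        ∑ x, ξ' (Sum.inl (0, x)) *
          (((K j)⁻¹).mulVec (f x) i * ((K j)⁻¹).mulVec (f x) i') := by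
      rw [Finset.sum_eq_single j]
      · exact Finset.sum_congr rfl fun x _ => by rw [hlink j x]; simp
      · intro l _ hl
        apply Finset.sum_eq_zero; intro x _
        simp [if_neg (Ne.symm hl)]
      · simp
    have h2 : (∑ y : Σ l : Fin s, Fin (r l), ξ' (Sum.inr y) *
        ((if j = y.1 then u y.1 y.2 i else 0) * if j = y.1 then u y.1 y.2 i' else 0)) =
        ∑ k, u j k i * u j k i' := by
      rw [← Finset.univ_sigma_univ, Finset.sum_sigma, Finset.sum_eq_single j]
      · exact Finset.sum_congr rfl fun k _ => by rw [haux ⟨j, k⟩]; simp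
      · intro l _ hl
        apply Finset.sum_eq_zero; intro k _
        simp [if_neg (Ne.symm hl)]
      · simp
    rw [← h1, ← h2]
  · rw [Matrix.blockDiagonal_apply_ne _ _ _ h]
    simp only [infoM, Matrix.sum_apply, Matrix.smul_apply, vecMulVec_apply, smul_eq_mul,
      Fintype.sum_sum_type, Fintype.sum_prod_type, ftil, Sum.elim_inl, Sum.elim_inr]
    have h1 : (∑ l : Fin s, ∑ x : X, ξ' (Sum.inl (l, x)) *
        ((if j = l then ((K l)⁻¹).mulVec (f x) i else 0) *
          if j' = l then ((K l)⁻¹).mulVec (f x) i' else 0)) = 0 := by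
      apply Finset.sum_eq_zero; intro l _
      apply Finset.sum_eq_zero; intro x _
      by_cases hj : j = l
      · rw [if_neg (fun hh : j' = l => h (hj.trans hh.symm))]; ring
      · rw [if_neg hj]; ring
    have h2 : (∑ y : Σ l : Fin s, Fin (r l), ξ' (Sum.inr y) *
        ((if j = y.1 then u y.1 y.2 i else 0) * if j' = y.1 then u y.1 y.2 i' else 0)) = 0 := by
      apply Finset.sum_eq_zero; intro y _
      by_cases hj : j = y.1
      · rw [if_neg (fun hh : j' = y.1 => h (hj.trans hh.symm))]; ring
      · rw [if_neg hj]; ring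
    rw [h1, h2, add_zero]

theorem stmt_15 {p s : ℕ} [NeZero s] {X : Type*} [Fintype X]
    (f : X → (Fin p → ℝ))
    (B K : Fin s → Matrix (Fin p) (Fin p) ℝ)
    (r : Fin s → ℕ)
    (hB : ∀ j, (B j).PosSemidef) (hr : ∀ j, (B j).rank = r j)
    (hK : ∀ j, IsUnit (K j))
    (u : (j : Fin s) → Fin (r j) → (Fin p → ℝ))
    (hu : ∀ j, (K j)⁻¹ * B j * ((K j)ᵀ)⁻¹ = ∑ k, vecMulVec (u j k) (u j k))
    (ξ' : ((Fin s × X) ⊕ (Σ j : Fin s, Fin (r j))) → ℝ)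
    (hξ'nn : ∀ z, 0 ≤ ξ' z)
    (hlink : ∀ (j : Fin s) (x : X), ξ' (Sum.inl (j, x)) = ξ' (Sum.inl (0, x)))
    (haux : ∀ y : (Σ j : Fin s, Fin (r j)), ξ' (Sum.inr y) = 1) :
    (IsUnit (infoM (ftil f K r u) ξ') ↔
        ∀ j, IsUnit (infoM f (fun x => ξ' (Sum.inl (0, x))) + B j)) ∧
    ((∀ j, IsUnit (infoM f (fun x => ξ' (Sum.inl (0, x))) + B j)) →
      (infoM (ftil f K r u) ξ')⁻¹.trace =
        ∑ j, ((infoM f (fun x => ξ' (Sum.inl (0, x))) + B j)⁻¹ *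
          (K j * (K j)ᵀ)).trace) := by
  set M := infoM f (fun x => ξ' (Sum.inl (0, x))) with hM
  set C := fun j => (K j)⁻¹ * (M + B j) * ((K j)ᵀ)⁻¹ with hC
  have hE : infoM (ftil f K r u) ξ' = blockDiagonal C :=
    infoM_ftil_eq f B K r u hu ξ' hlink haux
  have hKdet : ∀ j, (K j).det ≠ 0 := fun j =>
    (isUnit_iff_ne_zero.mp ((Matrix.isUnit_iff_isUnit_det _).mp (hK j)))
  have hdetC : ∀ j, (C j).det = ((K j).det)⁻¹ * (M + B j).det * ((K j).det)⁻¹ := by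
    intro j
    rw [hC]
    simp [Matrix.det_mul, Matrix.det_nonsing_inv, Ring.inverse_eq_inv]
  have hCunit : ∀ j, (IsUnit (C j) ↔ IsUnit (M + B j)) := by
    intro j
    rw [Matrix.isUnit_iff_isUnit_det, Matrix.isUnit_iff_isUnit_det, isUnit_iff_ne_zero,
      isUnit_iff_ne_zero, hdetC j]
    constructor
    · intro h h0; exact h (by rw [h0]; ring)
    · intro h; exact mul_ne_zero (mul_ne_zero (inv_ne_zero (hKdet j)) h) (inv_ne_zero (hKdet j))
  constructor
  · rw [hE, Matrix.isUnit_iff_isUnit_det, Matrix.det_blockDiagonal, isUnit_iff_ne_zero,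
      Finset.prod_ne_zero_iff]
    constructor
    · intro h j
      exact (hCunit j).mp ((Matrix.isUnit_iff_isUnit_det _).mpr
        (isUnit_iff_ne_zero.mpr (h j (Finset.mem_univ j))))
    · intro h j _
      exact isUnit_iff_ne_zero.mp ((Matrix.isUnit_iff_isUnit_det _).mp
        ((hCunit j).mpr (h j)))
  · intro hall
    have hCu : ∀ j, IsUnit (C j).det := fun j =>
      (Matrix.isUnit_iff_isUnit_det _).mp ((hCunit j).mpr (hall j))
    have hinv : (blockDiagonal C)⁻¹ = blockDiagonal (fun j => (C j)⁻¹) := by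
      apply Matrix.inv_eq_right_inv
      rw [← blockDiagonal_mul,
        show (fun j => C j * (C j)⁻¹) = fun _ : Fin s => (1 : Matrix (Fin p) (Fin p) ℝ) from
          funext fun j => Matrix.mul_nonsing_inv _ (hCu j)]
      exact Matrix.blockDiagonal_one
    rw [hE, hinv, Matrix.trace_blockDiagonal]
    refine Finset.sum_congr rfl fun j _ => ?_
    have hCinv : (C j)⁻¹ = (K j)ᵀ * (M + B j)⁻¹ * K j := by
      rw [hC]
      rw [Matrix.mul_inv_rev, Matrix.mul_inv_rev,
        Matrix.nonsing_inv_nonsing_inv _ ((Matrix.isUnit_iff_isUnit_det _).mp (hK j)),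
        Matrix.nonsing_inv_nonsing_inv _
          (by rw [Matrix.det_transpose]; exact (Matrix.isUnit_iff_isUnit_det _).mp (hK j)),
        Matrix.mul_assoc]
    rw [hCinv, Matrix.trace_mul_cycle, Matrix.trace_mul_comm]
end

section
/- Main theorem (conversion of CBR-optimality to constrained A-optimality): Let Ξ be a set of designs on 𝒳 and Ξ̃ be the set of extended designs ξ̃ on 𝒳̃ satisfying ξ̃(j,x)=ξ̃(1,x) for all x and j=2,…,s, ξ̃(y)=1 for auxiliary points y, and ξ̃(1,·) ∈ Ξ. Define Φ(ξ) = Σ_j tr((M(ξ)+B_j)⁻¹H_j) when all M(ξ)+B_j are invertible and Φ(ξ)=+∞ otherwise; define Φ_A(ξ̃)=tr(M̃(ξ̃)⁻¹) when M̃(ξ̃) is invertible and +∞ otherwise. If ξ̃* minimizes Φ_A over Ξ̃, then ξ̃*(1,·) minimizes Φ over Ξ. -/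
/-!
The extension `ξ̃` of a design `ξ` (weight `ξ x` on every copy `(j, x)`, weight `1` on the
auxiliary points) has a block diagonal information matrix with blocks
`K_j⁻¹ (M(ξ) + B_j) K_j⁻ᵀ`. It is therefore invertible exactly when every `M(ξ) + B_j` is, and then
`tr M̃(ξ̃)⁻¹ = Σ_j tr (K_jᵀ (M(ξ) + B_j)⁻¹ K_j) = Σ_j tr ((M(ξ) + B_j)⁻¹ H_j)`, so `Φ_A(ξ̃) = Φ(ξ)`.
Since `ξ ↦ ξ̃` maps `Ξ` onto `Ξ̃`, minimizers correspond.
-/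

open Matrix
open scoped Classical

/-- The compound Bayes risk criterion, with value `⊤` for singular designs. -/
noncomputable def CBRC {p s : ℕ} {X : Type*} [Fintype X] (f : X → (Fin p → ℝ))
    (B H : Fin s → Matrix (Fin p) (Fin p) ℝ) (ξ : X → ℝ) : EReal :=
  if ∀ j, IsUnit (infoM f ξ + B j)
  then ((∑ j, ((infoM f ξ + B j)⁻¹ * H j).trace : ℝ) : EReal)
  else ⊤

/-- The A-optimality criterion, with value `⊤` for singular designs. -/
noncomputable def PhiA {X : Type*} [Fintype X] {n : Type*} [Fintype n] [DecidableEq n]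
    (f : X → (n → ℝ)) (ξ : X → ℝ) : EReal :=
  if IsUnit (infoM f ξ) then (((infoM f ξ)⁻¹.trace : ℝ) : EReal) else ⊤

namespace Matrix

variable {n o R : Type*}

def padBlock [DecidableEq o] [Zero R] (j : o) (v : n → R) : n × o → R :=
  fun iq => if iq.2 = j then v iq.1 else 0

lemma vecMulVec_padBlock [DecidableEq o] [MulZeroClass R] (j : o) (v w : n → R) :
    vecMulVec (padBlock j v) (padBlock j w) = blockDiagonal (Pi.single j (vecMulVec v w)) := by
  ext ⟨i, q⟩ ⟨i', q'⟩
  simp only [padBlock, vecMulVec_apply, blockDiagonal_apply, Pi.single_apply]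
  split_ifs <;> simp_all [vecMulVec_apply]

lemma blockDiagonal_sum {m ι : Type*} [DecidableEq o] [AddCommMonoid R]
    (t : Finset ι) (F : ι → o → Matrix m m R) :
    blockDiagonal (∑ z ∈ t, F z) = ∑ z ∈ t, blockDiagonal (F z) :=
  map_sum (blockDiagonalAddMonoidHom m m o R) F t

lemma isUnit_blockDiagonal_iff [Fintype n] [DecidableEq n] [Fintype o] [DecidableEq o]
    [CommRing R] (M : o → Matrix n n R) :
    IsUnit (blockDiagonal M) ↔ ∀ j, IsUnit (M j) := by
  simp only [isUnit_iff_isUnit_det, det_blockDiagonal, IsUnit.prod_iff, Finset.mem_univ,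
    true_implies]

lemma inv_blockDiagonal [Fintype n] [DecidableEq n] [Fintype o] [DecidableEq o]
    [CommRing R] {M : o → Matrix n n R} (hM : ∀ j, IsUnit (M j)) :
    (blockDiagonal M)⁻¹ = blockDiagonal fun j => (M j)⁻¹ := by
  refine inv_eq_right_inv ?_
  rw [← blockDiagonal_mul, ← blockDiagonal_one]
  exact congrArg _ (funext fun j => mul_nonsing_inv _ ((isUnit_iff_isUnit_det _).mp (hM j)))

variable [Fintype n] [DecidableEq n] [CommRing R] {K : Matrix n n R}

lemma isUnit_inv_mul_mul_transpose_inv_iff (hK : IsUnit K) (A : Matrix n n R) :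
    IsUnit (K⁻¹ * A * Kᵀ⁻¹) ↔ IsUnit A := by
  have hKdet : IsUnit K.det := (isUnit_iff_isUnit_det K).mp hK
  have hKTdet : IsUnit Kᵀ⁻¹.det := by rwa [isUnit_nonsing_inv_det_iff, det_transpose]
  rw [isUnit_iff_isUnit_det, isUnit_iff_isUnit_det, det_mul, det_mul, IsUnit.mul_iff,
    IsUnit.mul_iff, isUnit_nonsing_inv_det_iff]
  exact ⟨fun h => h.1.2, fun h => ⟨⟨hKdet, h⟩, hKTdet⟩⟩

lemma trace_inv_inv_mul_mul_transpose_inv (hK : IsUnit K) (A : Matrix n n R) :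
    (K⁻¹ * A * Kᵀ⁻¹)⁻¹.trace = (A⁻¹ * (K * Kᵀ)).trace := by
  have hKdet : IsUnit K.det := (isUnit_iff_isUnit_det K).mp hK
  have hKTdet : IsUnit Kᵀ.det := by rwa [det_transpose]
  rw [mul_inv_rev, mul_inv_rev, nonsing_inv_nonsing_inv _ hKTdet,
    nonsing_inv_nonsing_inv _ hKdet, ← Matrix.mul_assoc, trace_mul_cycle, trace_mul_comm]

end Matrix

section infoM

variable {X Y : Type*} [Fintype X] [Fintype Y] {n : Type*} [Fintype n] [DecidableEq n]

lemma infoM_sum (f : X ⊕ Y → n → ℝ) (ξ : X ⊕ Y → ℝ) :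
    infoM f ξ = infoM (f ∘ Sum.inl) (ξ ∘ Sum.inl) + infoM (f ∘ Sum.inr) (ξ ∘ Sum.inr) :=
  Fintype.sum_sum_type _

lemma infoM_comp_equiv (e : Y ≃ X) (f : X → n → ℝ) (ξ : X → ℝ) :
    infoM (f ∘ e) (ξ ∘ e) = infoM f ξ :=
  Fintype.sum_equiv e _ _ fun _ => rfl

lemma infoM_mulVec (A : Matrix n n ℝ) (f : X → n → ℝ) (ξ : X → ℝ) :
    infoM (fun x => A *ᵥ f x) ξ = A * infoM f ξ * Aᵀ := by
  simp only [infoM, Matrix.mul_sum, Matrix.sum_mul, Matrix.mul_smul, Matrix.smul_mul,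
    mul_vecMulVec, vecMulVec_mul, vecMul_transpose]

lemma infoM_one (f : X → n → ℝ) : infoM f 1 = ∑ x, vecMulVec (f x) (f x) := by
  simp [infoM]

lemma infoM_padBlock {o : Type*} [Fintype o] [DecidableEq o] {Z : o → Type*}
    [∀ j, Fintype (Z j)] (g : (j : o) → Z j → n → ℝ) (ξ : (Σ j, Z j) → ℝ) :
    infoM (fun z => padBlock z.1 (g z.1 z.2)) ξ =
      blockDiagonal fun j => infoM (g j) fun z => ξ ⟨j, z⟩ := by
  simp only [infoM, Matrix.vecMulVec_padBlock, ← blockDiagonal_smul, ← blockDiagonal_sum]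
  refine congrArg _ (funext fun j => ?_)
  simp [Finset.sum_apply, Fintype.sum_sigma, Pi.single_apply]

end infoM

section ExtendedModel

variable {p s : ℕ} {X : Type*} [Fintype X] (r : Fin s → ℕ)

def extendDesign (ξ : X → ℝ) : (Fin s × X) ⊕ (Σ j : Fin s, Fin (r j)) → ℝ :=
  Sum.elim (fun jx => ξ jx.2) 1

variable {r} (f : X → Fin p → ℝ) {B K H : Fin s → Matrix (Fin p) (Fin p) ℝ}
  {u : (j : Fin s) → Fin (r j) → Fin p → ℝ}

lemma infoM_ftil_extendDesign
    (hu : ∀ j, (K j)⁻¹ * B j * ((K j)ᵀ)⁻¹ = ∑ k, vecMulVec (u j k) (u j k)) (ξ : X → ℝ) :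
    infoM (ftil f K r u) (extendDesign r ξ) =
      blockDiagonal fun j => (K j)⁻¹ * (infoM f ξ + B j) * ((K j)ᵀ)⁻¹ := by
  -- on both summands `ftil` is definitionally a `padBlock` family
  have hdesign : infoM (ftil f K r u ∘ Sum.inl) (extendDesign r ξ ∘ Sum.inl) =
      blockDiagonal fun j => (K j)⁻¹ * infoM f ξ * ((K j)ᵀ)⁻¹ := by
    rw [← infoM_comp_equiv (Equiv.sigmaEquivProd (Fin s) X)]
    exact (infoM_padBlock (fun j x => (K j)⁻¹ *ᵥ f x) _).trans
      (congrArg _ (funext fun j => by rw [infoM_mulVec, transpose_nonsing_inv]; rfl))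
  have hprior : infoM (ftil f K r u ∘ Sum.inr) (extendDesign r ξ ∘ Sum.inr) =
      blockDiagonal fun j => (K j)⁻¹ * B j * ((K j)ᵀ)⁻¹ :=
    (infoM_padBlock u _).trans (congrArg _ (funext fun j => by rw [hu, ← infoM_one]; rfl))
  rw [infoM_sum, hdesign, hprior, ← blockDiagonal_add]
  exact congrArg _ (funext fun j => by rw [Pi.add_apply, Matrix.mul_add, Matrix.add_mul])

lemma PhiA_ftil_extendDesign (hK : ∀ j, IsUnit (K j)) (hH : ∀ j, H j = K j * (K j)ᵀ)
    (hu : ∀ j, (K j)⁻¹ * B j * ((K j)ᵀ)⁻¹ = ∑ k, vecMulVec (u j k) (u j k)) (ξ : X → ℝ) :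
    PhiA (ftil f K r u) (extendDesign r ξ) = CBRC f B H ξ := by
  simp only [PhiA, CBRC, infoM_ftil_extendDesign f hu, isUnit_blockDiagonal_iff,
    isUnit_inv_mul_mul_transpose_inv_iff (hK _)]
  split_ifs with hunit
  · rw [inv_blockDiagonal fun j => (isUnit_inv_mul_mul_transpose_inv_iff (hK j) _).mpr (hunit j),
      trace_blockDiagonal]
    simp only [trace_inv_inv_mul_mul_transpose_inv (hK _), hH]
  · rfl

end ExtendedModel

theorem stmt_16_general {p s : ℕ} [NeZero s] {X : Type*} [Fintype X]
    (f : X → (Fin p → ℝ))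
    (B K H : Fin s → Matrix (Fin p) (Fin p) ℝ)
    (r : Fin s → ℕ)
    (hK : ∀ j, IsUnit (K j)) (hH : ∀ j, H j = K j * (K j)ᵀ)
    (u : (j : Fin s) → Fin (r j) → (Fin p → ℝ))
    (hu : ∀ j, (K j)⁻¹ * B j * ((K j)ᵀ)⁻¹ = ∑ k, vecMulVec (u j k) (u j k))
    (Ξ : Set (X → ℝ))
    (Ξtil : Set (((Fin s × X) ⊕ (Σ j : Fin s, Fin (r j))) → ℝ))
    (hΞtil : ∀ ξ', ξ' ∈ Ξtil ↔
      ((∀ (j : Fin s) (x : X), ξ' (Sum.inl (j, x)) = ξ' (Sum.inl (0, x))) ∧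
       (∀ y : (Σ j : Fin s, Fin (r j)), ξ' (Sum.inr y) = 1) ∧
       (fun x => ξ' (Sum.inl (0, x))) ∈ Ξ))
    (ξ'star : ((Fin s × X) ⊕ (Σ j : Fin s, Fin (r j))) → ℝ)
    (hmem : ξ'star ∈ Ξtil)
    (hopt : ∀ ξ' ∈ Ξtil, PhiA (ftil f K r u) ξ'star ≤ PhiA (ftil f K r u) ξ') :
    (fun x => ξ'star (Sum.inl (0, x))) ∈ Ξ ∧
    ∀ ξ ∈ Ξ, CBRC f B H (fun x => ξ'star (Sum.inl (0, x))) ≤ CBRC f B H ξ := by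
  obtain ⟨hblocks, hprior, hbase⟩ := (hΞtil ξ'star).mp hmem
  have hstar : ξ'star = extendDesign r fun x => ξ'star (Sum.inl (0, x)) := by
    funext y
    rcases y with ⟨j, x⟩ | y
    · exact hblocks j x
    · exact hprior y
  refine ⟨hbase, fun ξ hξ => ?_⟩
  have hext : extendDesign r ξ ∈ Ξtil := (hΞtil _).mpr ⟨fun _ _ => rfl, fun _ => rfl, hξ⟩
  rw [← PhiA_ftil_extendDesign f hK hH hu, ← PhiA_ftil_extendDesign f hK hH hu, ← hstar]
  exact hopt _ hext

theorem stmt_16 {p s : ℕ} [NeZero s] {X : Type*} [Fintype X]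
    (f : X → (Fin p → ℝ))
    (B K H : Fin s → Matrix (Fin p) (Fin p) ℝ)
    (r : Fin s → ℕ)
    (hB : ∀ j, (B j).PosSemidef) (hr : ∀ j, (B j).rank = r j)
    (hK : ∀ j, IsUnit (K j)) (hH : ∀ j, H j = K j * (K j)ᵀ)
    (u : (j : Fin s) → Fin (r j) → (Fin p → ℝ))
    (hu : ∀ j, (K j)⁻¹ * B j * ((K j)ᵀ)⁻¹ = ∑ k, vecMulVec (u j k) (u j k))
    (Ξ : Set (X → ℝ)) (hΞnn : ∀ ξ ∈ Ξ, ∀ x, 0 ≤ ξ x)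
    (Ξtil : Set (((Fin s × X) ⊕ (Σ j : Fin s, Fin (r j))) → ℝ))
    (hΞtil : ∀ ξ', ξ' ∈ Ξtil ↔
      ((∀ (j : Fin s) (x : X), ξ' (Sum.inl (j, x)) = ξ' (Sum.inl (0, x))) ∧
       (∀ y : (Σ j : Fin s, Fin (r j)), ξ' (Sum.inr y) = 1) ∧
       (fun x => ξ' (Sum.inl (0, x))) ∈ Ξ))
    (ξ'star : ((Fin s × X) ⊕ (Σ j : Fin s, Fin (r j))) → ℝ)
    (hmem : ξ'star ∈ Ξtil)
    (hopt : ∀ ξ' ∈ Ξtil, PhiA (ftil f K r u) ξ'star ≤ PhiA (ftil f K r u) ξ') :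
    (fun x => ξ'star (Sum.inl (0, x))) ∈ Ξ ∧
    ∀ ξ ∈ Ξ, CBRC f B H (fun x => ξ'star (Sum.inl (0, x))) ≤ CBRC f B H ξ :=
  stmt_16_general f B K H r hK hH u hu Ξ Ξtil hΞtil ξ'star hmem hopt
end
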